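/- (Main Theorem) Let G be a finite simple graph with adjacency matrix (a_{ij}), let g be an admissible function with g(x) < 1 for all x with d_{S^1}(0,x) > 0, and set c(g) = inf over x with 0 < d_{S^1}(0,x) ≤ π of (2/π)·d_{S^1}(0,x)/(1 − g(x)). If (θ_1,…,θ_n) is a global minimizer of the Kuramoto-type energy f over [0,2π)^n, then the expected cut under randomized rounding satisfies E(θ) ≥ c(g)·MaxCut(G). -/

import Mathlib

open Real Finset MeasureTheory intervalIntegral

/-- The circle distance between angles `x` and `y`:
the minimum over integers `k` of `|x - y - 2πk|`. -/
noncomputable def dS1 (x y : ℝ) : ℝ := ⨅ k : ℤ, |x - y - 2 * Real.pi * k|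

/-- `g : ℝ → ℝ` is admissible: 2π-periodic, even, differentiable, with
`g 0 = 1 = max g` and `g π = -1 = min g`. -/
def Admissible (g : ℝ → ℝ) : Prop :=
  Function.Periodic g (2 * Real.pi) ∧ (∀ x, g (-x) = g x) ∧ Differentiable ℝ g ∧
    g 0 = 1 ∧ (∀ x, g x ≤ 1) ∧ g Real.pi = -1 ∧ (∀ x, -1 ≤ g x)

/-- The approximation constant associated to an admissible function `g`. -/
noncomputable def cg (g : ℝ → ℝ) : ℝ :=
  sInf {y : ℝ | ∃ x : ℝ, 0 < dS1 0 x ∧ dS1 0 x ≤ Real.pi ∧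
    y = (2 / Real.pi) * dS1 0 x / (1 - g x)}

/-- Cut size of the partition (S, Sᶜ): number of edges with exactly one endpoint in S. -/
noncomputable def cutSize {n : ℕ} (a : Fin n → Fin n → ℝ) (S : Finset (Fin n)) : ℝ :=
  (1 / 2) * ∑ i, ∑ j, a i j * (if (i ∈ S) ↔ (j ∈ S) then 0 else 1)

/-- The maximum cut of the graph with adjacency matrix `a`. -/
noncomputable def maxCut {n : ℕ} (a : Fin n → Fin n → ℝ) : ℝ :=
  ⨆ S : Finset (Fin n), cutSize a S

/-- The Kuramoto-type energy of the configuration θ. -/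
noncomputable def energy {n : ℕ} (a : Fin n → Fin n → ℝ) (g : ℝ → ℝ)
    (θ : Fin n → ℝ) : ℝ :=
  ∑ i, ∑ j, a i j * g (θ i - θ j)

/-- The size of the cut induced by the line through the origin at angle `φ`. -/
noncomputable def cutAt {n : ℕ} (a : Fin n → Fin n → ℝ) (θ : Fin n → ℝ) (φ : ℝ) : ℝ :=
  (1 / 2) * ∑ i, ∑ j, a i j *
    (if Real.sin (θ i - φ) * Real.sin (θ j - φ) < 0 then 1 else 0)

/-- The expected cut under randomized rounding of the configuration θ. -/
noncomputable def expCut {n : ℕ} (a : Fin n → Fin n → ℝ) (θ : Fin n → ℝ) : ℝ :=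
  (1 / Real.pi) * ∫ φ in (0:ℝ)..Real.pi, cutAt a θ φ

/-!
A uniformly random line through the origin separates the angles `x` and `y` with probability
`d(x, y) / π`, so `E(θ) = (1/2π) ∑ a_ij d(θ_i, θ_j)`. A cut `S` is realized by the configuration
putting `S` at angle `0` and its complement at `π`, whose energy is `∑ a_ij - 4 Cut(S)`.
Minimality of `θ` gives `4 Cut(S) ≤ ∑ a_ij (1 - g(θ_i - θ_j))`, and by the definition of `c(g)`
each term `c(g) (1 - g(θ_i - θ_j))` is at most `(2/π) d(θ_i, θ_j)`.
-/

/-- The infimum defining `dS1` is attained at `k = round ((x - y) / 2π)`, which is also the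
formula for the norm on `AddCircle (2π)`. -/
lemma dS1_eq_norm (x y : ℝ) : dS1 x y = ‖((x - y : ℝ) : AddCircle (2 * π))‖ := by
  have h2π : 0 < 2 * π := by positivity
  have hscale : ∀ t : ℝ, 2 * π * |(2 * π)⁻¹ * (x - y) - t| = |x - y - 2 * π * t| := fun t => by
    rw [← abs_of_pos h2π, ← abs_mul, abs_of_pos h2π]
    congr 1
    field_simp
  rw [AddCircle.norm_eq' _ h2π]
  refine le_antisymm ?_ (le_ciInf fun k => ?_)
  · refine ciInf_le_of_le ⟨0, ?_⟩ (round ((2 * π)⁻¹ * (x - y) : ℝ)) (hscale _).ge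
    rintro _ ⟨k, rfl⟩
    exact abs_nonneg _
  · rw [← hscale]
    exact mul_le_mul_of_nonneg_left (round_le _ k) h2π.le

lemma dS1_zero_left (x : ℝ) : dS1 0 x = ‖(x : AddCircle (2 * π))‖ := by
  rw [dS1_eq_norm, zero_sub, AddCircle.coe_neg, norm_neg]

lemma cos_norm_coe_addCircle (x : ℝ) : cos ‖(x : AddCircle (2 * π))‖ = cos x := by
  rw [AddCircle.norm_eq, cos_abs, inv_mul_eq_div, cos_sub_int_mul_two_pi]

lemma norm_coe_addCircle_le_pi (x : ℝ) : ‖(x : AddCircle (2 * π))‖ ≤ π := by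
  have := AddCircle.norm_le_half_period (2 * π) (x := x) (by positivity)
  rwa [abs_of_pos (by positivity), mul_div_cancel_left₀ _ two_ne_zero] at this

lemma integral_ite_cos_lt_cos {d : ℝ} (hd0 : 0 ≤ d) (hdπ : d ≤ π) :
    ∫ u in -π..π, (if cos d < cos u then (1 : ℝ) else 0) = 2 * d := by
  have hind : Set.EqOn (fun u => if cos d < cos u then (1 : ℝ) else 0)
      ((Set.Ioo (-d) d).indicator fun _ => 1) (Set.uIcc (-π) π) := by
    intro u hu
    rw [Set.uIcc_of_le (by linarith [pi_pos])] at hu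
    have hu' : |u| ∈ Set.Icc 0 π := ⟨abs_nonneg u, abs_le.mpr hu⟩
    have hiff : cos d < cos u ↔ u ∈ Set.Ioo (-d) d := by
      rw [← cos_abs u, strictAntiOn_cos.lt_iff_gt ⟨hd0, hdπ⟩ hu', abs_lt, Set.mem_Ioo]
    simp only [Set.indicator_apply, hiff]
  rw [intervalIntegral.integral_congr hind, intervalIntegral.integral_of_le (by linarith [pi_pos]),
    setIntegral_indicator measurableSet_Ioo,
    Set.inter_eq_right.mpr (Set.Ioo_subset_Ioc_self.trans (Set.Ioc_subset_Ioc (by linarith) hdπ)),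
    setIntegral_const, volume_real_Ioo_of_le (by linarith), smul_eq_mul, mul_one]
  ring

lemma sin_mul_sin_neg_iff (x y φ : ℝ) :
    sin (x - φ) * sin (y - φ) < 0 ↔ cos (x - y) < cos (x + y - 2 * φ) := by
  have h := two_mul_sin_mul_sin (x - φ) (y - φ)
  rw [show x - φ - (y - φ) = x - y by ring, show x - φ + (y - φ) = x + y - 2 * φ by ring] at h
  constructor <;> intro <;> linarith

lemma integral_ite_sin_mul_sin_neg (x y : ℝ) :
    ∫ φ in (0 : ℝ)..π, (if sin (x - φ) * sin (y - φ) < 0 then (1 : ℝ) else 0) = dS1 x y := by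
  -- After `u = x + y - 2φ`, the integral is half the length of `{u | cos d < cos u}` over a period.
  set d := ‖((x - y : ℝ) : AddCircle (2 * π))‖
  set F : ℝ → ℝ := fun u => if cos d < cos u then 1 else 0
  have hF : Function.Periodic F (2 * π) := fun u => by simp only [F, cos_add_two_pi]
  have hpt : ∀ φ, (if sin (x - φ) * sin (y - φ) < 0 then (1 : ℝ) else 0) = F (x + y - 2 * φ) := by
    intro φ
    simp only [F, sin_mul_sin_neg_iff, d, cos_norm_coe_addCircle]
  have hshift : ∫ u in (x + y - 2 * π)..(x + y), F u = ∫ u in -π..π, F u := by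
    simpa [show -π + 2 * π = π by ring] using hF.intervalIntegral_add_eq (x + y - 2 * π) (-π)
  simp_rw [hpt]
  rw [intervalIntegral.integral_comp_sub_mul F two_ne_zero, mul_zero, sub_zero, hshift,
    integral_ite_cos_lt_cos (norm_nonneg _) (norm_coe_addCircle_le_pi _), dS1_eq_norm, smul_eq_mul]
  ring

lemma intervalIntegrable_ite_sin_mul_sin_neg (x y a b : ℝ) :
    IntervalIntegrable (fun φ => if sin (x - φ) * sin (y - φ) < 0 then (1 : ℝ) else 0)
      volume a b := by
  have hs : MeasurableSet {φ : ℝ | sin (x - φ) * sin (y - φ) < 0} :=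
    measurableSet_lt (by fun_prop) measurable_const
  refine (intervalIntegrable_const (c := (1 : ℝ))).mono_fun
    (Measurable.ite hs measurable_const measurable_const).aestronglyMeasurable
    (Filter.Eventually.of_forall fun φ => ?_)
  dsimp only
  split_ifs <;> simp

lemma expCut_eq_sum_dS1 {n : ℕ} (a : Fin n → Fin n → ℝ) (θ : Fin n → ℝ) :
    expCut a θ = (2 * π)⁻¹ * ∑ i, ∑ j, a i j * dS1 (θ i) (θ j) := by
  have hint : ∀ i j, IntervalIntegrable
      (fun φ => a i j * if sin (θ i - φ) * sin (θ j - φ) < 0 then (1 : ℝ) else 0) volume 0 π :=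
    fun i j => (intervalIntegrable_ite_sin_mul_sin_neg _ _ _ _).const_mul _
  have hrow : ∀ i, IntervalIntegrable
      (fun φ => ∑ j, a i j * if sin (θ i - φ) * sin (θ j - φ) < 0 then (1 : ℝ) else 0)
      volume 0 π := fun i => by
    simpa only [Finset.sum_fn] using IntervalIntegrable.sum univ fun j _ => hint i j
  simp only [expCut, cutAt]
  rw [intervalIntegral.integral_const_mul,
    intervalIntegral.integral_finsetSum fun i _ => hrow i]
  simp_rw [intervalIntegral.integral_finsetSum fun j _ => hint _ j,
    intervalIntegral.integral_const_mul, integral_ite_sin_mul_sin_neg]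
  field_simp

lemma cg_nonneg {g : ℝ → ℝ} (hlt : ∀ x, 0 < dS1 0 x → g x < 1) : 0 ≤ cg g := by
  refine Real.sInf_nonneg ?_
  rintro _ ⟨x, hx0, -, rfl⟩
  have := hlt x hx0
  exact div_nonneg (by positivity) (by linarith)

lemma cg_le {g : ℝ → ℝ} (hlt : ∀ x, 0 < dS1 0 x → g x < 1) {x : ℝ} (hx0 : 0 < dS1 0 x) :
    cg g ≤ 2 / π * dS1 0 x / (1 - g x) := by
  refine csInf_le ⟨0, ?_⟩ ⟨x, hx0, ?_, rfl⟩
  · rintro _ ⟨z, hz0, -, rfl⟩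
    have := hlt z hz0
    exact div_nonneg (by positivity) (by linarith)
  · rw [dS1_zero_left]
    exact norm_coe_addCircle_le_pi x

lemma cg_mul_one_sub_le {g : ℝ → ℝ} (hlt : ∀ x, 0 < dS1 0 x → g x < 1)
    (hper : Function.Periodic g (2 * π)) (hg0 : g 0 = 1) (x y : ℝ) :
    cg g * (1 - g (x - y)) ≤ 2 / π * dS1 x y := by
  rw [dS1_eq_norm]
  rcases (norm_nonneg ((x - y : ℝ) : AddCircle (2 * π))).eq_or_lt with h0 | hpos
  · obtain ⟨k, hk⟩ := (AddCircle.coe_eq_zero_iff _).mp (norm_eq_zero.mp h0.symm)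
    rw [← h0, ← hk, ← zero_add (k • (2 * π)), (hper.zsmul k) 0, hg0]
    simp
  · rw [← dS1_zero_left] at hpos ⊢
    have := hlt _ hpos
    rw [← le_div_iff₀ (by linarith)]
    exact cg_le hlt hpos

noncomputable def cutAngles {n : ℕ} (S : Finset (Fin n)) : Fin n → ℝ :=
  fun i => if i ∈ S then 0 else π

lemma cutAngles_mem_Ico {n : ℕ} (S : Finset (Fin n)) (i : Fin n) :
    cutAngles S i ∈ Set.Ico 0 (2 * π) := by
  unfold cutAngles
  split_ifs <;> constructor <;> linarith [pi_pos]

lemma energy_cutAngles {n : ℕ} (a : Fin n → Fin n → ℝ) {g : ℝ → ℝ} (heven : ∀ x, g (-x) = g x)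
    (hg0 : g 0 = 1) (hgπ : g π = -1) (S : Finset (Fin n)) :
    energy a g (cutAngles S) = ∑ i, ∑ j, a i j - 4 * cutSize a S := by
  have hterm : ∀ i j, a i j * g (cutAngles S i - cutAngles S j)
      = a i j - 2 * (a i j * if (i ∈ S ↔ j ∈ S) then 0 else 1) := by
    intro i j
    by_cases hi : i ∈ S <;> by_cases hj : j ∈ S <;>
      simp [cutAngles, hi, hj, hg0, hgπ, heven] <;> ring
  simp only [energy, cutSize, hterm, sum_sub_distrib, ← mul_sum]
  ring

lemma four_mul_cutSize_le {n : ℕ} (a : Fin n → Fin n → ℝ) {g : ℝ → ℝ}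
    (heven : ∀ x, g (-x) = g x) (hg0 : g 0 = 1) (hgπ : g π = -1) (θ : Fin n → ℝ)
    {S : Finset (Fin n)} (hmin : energy a g θ ≤ energy a g (cutAngles S)) :
    4 * cutSize a S ≤ ∑ i, ∑ j, a i j * (1 - g (θ i - θ j)) := by
  rw [energy_cutAngles a heven hg0 hgπ] at hmin
  simp only [mul_sub, mul_one, sum_sub_distrib]
  unfold energy at hmin
  linarith

lemma cg_mul_sum_le_four_mul_expCut {n : ℕ} (a : Fin n → Fin n → ℝ) (ha : ∀ i j, 0 ≤ a i j)
    {g : ℝ → ℝ} (hlt : ∀ x, 0 < dS1 0 x → g x < 1) (hper : Function.Periodic g (2 * π))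
    (hg0 : g 0 = 1) (θ : Fin n → ℝ) :
    cg g * ∑ i, ∑ j, a i j * (1 - g (θ i - θ j)) ≤ 4 * expCut a θ := by
  calc cg g * ∑ i, ∑ j, a i j * (1 - g (θ i - θ j))
      = ∑ i, ∑ j, a i j * (cg g * (1 - g (θ i - θ j))) := by
        simp only [mul_sum]; congr! 2; ring
    _ ≤ ∑ i, ∑ j, a i j * (2 / π * dS1 (θ i) (θ j)) := by
        refine sum_le_sum fun i _ => sum_le_sum fun j _ => ?_
        exact mul_le_mul_of_nonneg_left (cg_mul_one_sub_le hlt hper hg0 _ _) (ha i j)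
    _ = 4 * expCut a θ := by
        rw [expCut_eq_sum_dS1]
        simp only [mul_sum]
        refine sum_congr rfl fun i _ => sum_congr rfl fun j _ => ?_
        field_simp
        ring

theorem stmt6_general (n : ℕ) (a : Fin n → Fin n → ℝ)
    (h01 : ∀ i j, a i j = 0 ∨ a i j = 1)
    (g : ℝ → ℝ) (hg : Admissible g)
    (hlt : ∀ x, 0 < dS1 0 x → g x < 1)
    (θ : Fin n → ℝ)
    (hmin : ∀ ψ : Fin n → ℝ, (∀ i, ψ i ∈ Set.Ico 0 (2 * Real.pi)) →
      energy a g θ ≤ energy a g ψ) :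
    expCut a θ ≥ cg g * maxCut a := by
  obtain ⟨hper, heven, -, hg0, -, hgπ, -⟩ := hg
  have ha : ∀ i j, 0 ≤ a i j := fun i j => by rcases h01 i j with h | h <;> simp [h]
  have hcut : ∀ S, cg g * cutSize a S ≤ expCut a θ := fun S => by
    have h4 := four_mul_cutSize_le a heven hg0 hgπ θ (hmin _ (cutAngles_mem_Ico S))
    have := mul_le_mul_of_nonneg_left h4 (cg_nonneg hlt)
    linarith [cg_mul_sum_le_four_mul_expCut a ha hlt hper hg0 θ]
  rw [ge_iff_le, maxCut, Real.mul_iSup_of_nonneg (cg_nonneg hlt)]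
  exact ciSup_le hcut

theorem stmt6 (n : ℕ) (a : Fin n → Fin n → ℝ)
    (hsymm : ∀ i j, a i j = a j i)
    (h01 : ∀ i j, a i j = 0 ∨ a i j = 1)
    (hdiag : ∀ i, a i i = 0)
    (g : ℝ → ℝ) (hg : Admissible g)
    (hlt : ∀ x, 0 < dS1 0 x → g x < 1)
    (θ : Fin n → ℝ) (hθ : ∀ i, θ i ∈ Set.Ico 0 (2 * Real.pi))
    (hmin : ∀ ψ : Fin n → ℝ, (∀ i, ψ i ∈ Set.Ico 0 (2 * Real.pi)) →
      energy a g θ ≤ energy a g ψ) :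
    expCut a θ ≥ cg g * maxCut a :=
  stmt6_general n a h01 g hg hlt θ hmin
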